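/- Let τ : M₃ × ℝ³ → ℝ be twice continuously differentiable and define v(F,p) as the partial gradient of τ with respect to p. Assume: (G) there exists c : ℝ³ → ℝ³ with v(F, p + d) − v(F, p) = c(d) for all F, p, d; (P) τ(F, p) = τ(F, −p) for all (F, p); and (N) for each (F, p), the partial derivative of v with respect to p at (F,p) is an invertible linear map of ℝ³. Then there exists a linear map V : ℝ³ → ℝ³, independent of F and p, which is symmetric and invertible, such that v(F, p) = V p for all (F, p). -/

import Mathlib

/-!
Parity makes `τ(F, ·)` even, so its gradient `v(F, ·)` vanishes at `0`. Galilean variance at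
`p = 0` then gives `v(F, ·) = c` for every `F`, and at general `p` it makes `c` additive; as a
continuous gradient, `c` is therefore a linear map `V`. Its derivative is the Hessian of
`τ(0, ·)`, hence symmetric, and normality at any point says that `V` itself is bijective.
-/

open scoped RealInnerProductSpace

noncomputable section

abbrev M3 : Type := EuclideanSpace ℝ (Fin 3 × Fin 3)
abbrev R3 : Type := EuclideanSpace ℝ (Fin 3)

open InnerProductSpace

theorem fderiv_zero_eq_zero_of_even {𝕜 E F : Type*} [NontriviallyNormedField 𝕜] [CharZero 𝕜]
    [NormedAddCommGroup E] [NormedSpace 𝕜 E] [NormedAddCommGroup F] [NormedSpace 𝕜 F]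
    {f : E → F} (hf : ∀ x, f (-x) = f x) : fderiv 𝕜 f 0 = 0 := by
  have hcomp := (ContinuousLinearEquiv.neg 𝕜 : E ≃L[𝕜] E).comp_right_fderiv (f := f) (x := 0)
  have hodd : fderiv 𝕜 f 0 = -fderiv 𝕜 f 0 := by
    ext y
    simpa [Function.comp_def, hf] using ContinuousLinearMap.ext_iff.mp hcomp y
  have htwo : (2 : 𝕜) • fderiv 𝕜 f 0 = 0 := by
    rw [two_smul]
    nth_rw 2 [hodd]
    exact add_neg_cancel _
  exact (smul_eq_zero.mp htwo).resolve_left two_ne_zero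

section Gradient

variable {E : Type*} [NormedAddCommGroup E] [InnerProductSpace ℝ E] [CompleteSpace E]
  {f : E → ℝ}

theorem gradient_zero_eq_zero_of_even (hf : ∀ x, f (-x) = f x) : gradient f 0 = 0 := by
  simp [gradient, fderiv_zero_eq_zero_of_even hf]

theorem ContDiff.continuous_gradient {n : WithTop ℕ∞} (hf : ContDiff ℝ n f) (hn : n ≠ 0) :
    Continuous (gradient f) :=
  (toDual ℝ E).symm.continuous.comp (hf.continuous_fderiv hn)

theorem isSymmetric_of_forall_hasGradientAt {V : E →L[ℝ] E}
    (hf : ∀ x, HasGradientAt f (V x) x) : (V : E →ₗ[ℝ] E).IsSymmetric := by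
  let D : E →L[ℝ] StrongDual ℝ E :=
    (toDual ℝ E).toContinuousLinearEquiv.toContinuousLinearMap.comp V
  have hsymm := second_derivative_symmetric (f' := D) hf (D.hasFDerivAt (x := 0))
  intro x y
  simpa [D, toDual_apply_apply, real_inner_comm] using hsymm x y

end Gradient

theorem eq_of_forall_add_sub_eq {G H : Type*} [AddZeroClass G] [AddGroup H] {f c : G → H}
    (h : ∀ p d, f (p + d) - f p = c d) (h0 : f 0 = 0) : f = c :=
  funext fun d => by simpa [h0] using h 0 d

theorem stmt5 (τ : M3 × R3 → ℝ) (hτ : ContDiff ℝ 2 τ)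
    (v : M3 → R3 → R3)
    (hv : ∀ (F : M3) (p : R3), v F p = gradient (fun q => τ (F, q)) p)
    (c : R3 → R3)
    (hG : ∀ (F : M3) (p d : R3), v F (p + d) - v F p = c d)
    (hP : ∀ (F : M3) (p : R3), τ (F, p) = τ (F, -p))
    (hN : ∀ (F : M3) (p : R3), Function.Bijective (fderiv ℝ (v F) p)) :
    ∃ V : R3 →L[ℝ] R3,
      (∀ x y : R3, ⟪V x, y⟫ = ⟪x, V y⟫) ∧
      Function.Bijective V ∧
      (∀ (F : M3) (p : R3), v F p = V p) := by
  have hτF (F : M3) : ContDiff ℝ 2 fun q => τ (F, q) :=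
    hτ.comp (contDiff_const.prodMk contDiff_id)
  have hvc (F : M3) : v F = c := eq_of_forall_add_sub_eq (hG F) <| by
    rw [hv, gradient_zero_eq_zero_of_even fun q => (hP F q).symm]
  have hadd (p d : R3) : c (p + d) = c p + c d := by
    rw [← hG 0 p d, hvc]
    abel
  have hcont : Continuous c := by
    rw [← hvc 0, funext (hv 0)]
    exact (hτF 0).continuous_gradient two_ne_zero
  let V := (AddMonoidHom.mk' c hadd).toRealLinearMap hcont
  have hvV (F : M3) : v F = V := hvc F
  refine ⟨V, isSymmetric_of_forall_hasGradientAt (f := fun q => τ (0, q)) fun p => ?_, ?_,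
    fun F p => by rw [hvV]⟩
  · rw [← hvV 0, hv]
    exact ((hτF 0).differentiable two_ne_zero).differentiableAt.hasGradientAt
  · simpa [hvV 0, V.fderiv] using hN 0 0
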